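/- arXiv:0711.1962 — 3 statements merged into one kernel-verified Lean document; each statement's English description precedes it below -/
import Mathlib

section
/- Minkowski addition distributes over the 'convex-hull-of-union' operation on convex sets: for convex sets K₁, K₂, K₃ ⊆ ℝ^m, one has convexHull(K₁ ∪ K₂) + K₃ = convexHull((K₁ + K₃) ∪ (K₂ + K₃)). -/
open Pointwise

theorem stmt_3 (m : ℕ) (K₁ K₂ K₃ : Set (Fin m → ℝ))
    (h₁ : Convex ℝ K₁) (h₂ : Convex ℝ K₂) (h₃ : Convex ℝ K₃) :
    convexHull ℝ (K₁ ∪ K₂) + K₃ = convexHull ℝ ((K₁ + K₃) ∪ (K₂ + K₃)) := by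
  rw [← Set.union_add, convexHull_add, h₃.convexHull_eq]
end

section
/- For natural numbers d₁, ..., d_n, the alternating sum over all nonempty subsets J ⊆ {1,...,n} satisfies ∑_{J ⊆ [n], J ≠ ∅} (-1)^{n - |J|} (∑_{j ∈ J} d_j)^{n+1} = ((n+1)!/2) · d₁d₂⋯d_n · (d₁ + d₂ + ... + d_n). -/
open Finset

private lemma my_multinomial_subset {α : Type*} [DecidableEq α] {s t : Finset α} (h : s ⊆ t)
    (f : α → ℕ) (hf : ∀ i ∈ t, i ∉ s → f i = 0) :
    Nat.multinomial t f = Nat.multinomial s f := by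
  unfold Nat.multinomial
  rw [← Finset.sum_subset h hf, ← Finset.prod_subset h
    (fun i hi his => by rw [hf i hi his]; rfl)]

private lemma my_alt_sum {β : Type*} [DecidableEq β] (x : Finset β) :
    ∑ J ∈ x.powerset, (-1 : ℚ) ^ (x.card - J.card) = if x = ∅ then 1 else 0 := by
  have h : ∀ J ∈ x.powerset, (-1 : ℚ) ^ (x.card - J.card)
      = (-1) ^ x.card * (-1) ^ J.card := by
    intro J hJ
    rw [mem_powerset] at hJ
    have hc : J.card ≤ x.card := card_le_card hJ
    have h1 : (-1 : ℚ) ^ (x.card - J.card) * (-1) ^ J.card = (-1) ^ x.card := by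
      rw [← pow_add, Nat.sub_add_cancel hc]
    have h2 : (-1 : ℚ) ^ J.card * (-1) ^ J.card = 1 := by
      rw [← pow_add]; exact Even.neg_one_pow ⟨J.card, rfl⟩
    calc (-1 : ℚ) ^ (x.card - J.card)
        = (-1) ^ (x.card - J.card) * ((-1) ^ J.card * (-1) ^ J.card) := by rw [h2, mul_one]
      _ = (-1) ^ x.card * (-1) ^ J.card := by rw [← mul_assoc, h1]
  rw [Finset.sum_congr rfl h, ← Finset.mul_sum]
  have h3 : ∑ J ∈ x.powerset, (-1 : ℚ) ^ J.card = if x = ∅ then 1 else 0 := by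
    rcases eq_or_ne x ∅ with hx | hx
    · subst hx; simp
    · rw [if_neg hx]
      have h4 := Finset.sum_powerset_neg_one_pow_card (x := x)
      rw [if_neg hx] at h4
      exact_mod_cast h4
  rw [h3]
  rcases eq_or_ne x ∅ with hx | hx
  · subst hx; simp
  · rw [if_neg hx, mul_zero]

private lemma my_inner {β : Type*} [Fintype β] [DecidableEq β] (T : Finset β) :
    ∑ J ∈ (Finset.univ : Finset β).powerset.filter (fun J => T ⊆ J),
        (-1 : ℚ) ^ (Fintype.card β - J.card)
      = if T = Finset.univ then 1 else 0 := by
  have key : ∑ J ∈ (Finset.univ : Finset β).powerset.filter (fun J => T ⊆ J),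
      (-1 : ℚ) ^ (Fintype.card β - J.card)
      = ∑ K ∈ Tᶜ.powerset, (-1 : ℚ) ^ (Tᶜ.card - K.card) := by
    refine Finset.sum_nbij' (fun J => J \ T) (fun K => K ∪ T) ?_ ?_ ?_ ?_ ?_
    · intro J hJ
      rw [mem_filter] at hJ
      rw [mem_powerset]
      intro x hx
      rw [mem_sdiff] at hx
      simpa using hx.2
    · intro K hK
      rw [mem_filter, mem_powerset]
      exact ⟨subset_univ _, subset_union_right⟩
    · intro J hJ
      rw [mem_filter] at hJ
      exact sdiff_union_of_subset hJ.2
    · intro K hK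
      rw [mem_powerset] at hK
      apply union_sdiff_cancel_right
      rw [disjoint_iff_inter_eq_empty]
      ext x
      simp only [mem_inter, notMem_empty, iff_false, not_and]
      intro hx
      have := hK hx
      simpa using this
    · intro J hJ
      rw [mem_filter] at hJ
      show (-1 : ℚ) ^ (Fintype.card β - J.card) = (-1 : ℚ) ^ (Tᶜ.card - (J \ T).card)
      congr 1
      have h1 : (J \ T).card + T.card = J.card := card_sdiff_add_card_eq_card hJ.2
      have h2 : T.card + Tᶜ.card = Fintype.card β := by
        rw [Finset.card_add_card_compl]
      have h3 : J.card ≤ Fintype.card β := by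
        simpa using card_le_card (subset_univ J)
      have h4 : (J \ T).card ≤ Tᶜ.card := by
        apply card_le_card
        intro x hx
        rw [mem_sdiff] at hx
        simpa using hx.2
      omega
  rw [key, my_alt_sum]
  congr 1
  rw [← Finset.compl_eq_empty_iff]

theorem stmt_9 (n : ℕ) (d : Fin n → ℕ) :
    ∑ J ∈ ((Finset.univ : Finset (Fin n)).powerset.filter (fun J => J ≠ ∅)),
        (-1 : ℚ) ^ (n - J.card) * (∑ j ∈ J, (d j : ℚ)) ^ (n + 1)
      = ((Nat.factorial (n + 1) : ℚ) / 2) * (∏ i : Fin n, (d i : ℚ)) *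
          (∑ i : Fin n, (d i : ℚ)) := by
  classical
  -- abbreviations
  set A : Finset (Fin n → ℕ) := Finset.piAntidiag (Finset.univ : Finset (Fin n)) (n + 1) with hA
  set C : (Fin n → ℕ) → ℚ := fun k =>
    (Nat.multinomial Finset.univ k : ℚ) * ∏ i : Fin n, (d i : ℚ) ^ k i with hC
  -- Step A: drop the filter
  have stepA : ∑ J ∈ ((Finset.univ : Finset (Fin n)).powerset.filter (fun J => J ≠ ∅)),
      (-1 : ℚ) ^ (n - J.card) * (∑ j ∈ J, (d j : ℚ)) ^ (n + 1)
      = ∑ J ∈ (Finset.univ : Finset (Fin n)).powerset,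
      (-1 : ℚ) ^ (n - J.card) * (∑ j ∈ J, (d j : ℚ)) ^ (n + 1) := by
    apply Finset.sum_filter_of_ne
    intro J _ hJ
    intro hJe
    apply hJ
    subst hJe
    simp
  rw [stepA]
  -- Step B: set identification for piAntidiag over subsets
  have hset : ∀ J ∈ (Finset.univ : Finset (Fin n)).powerset,
      Finset.piAntidiag J (n + 1) = A.filter (fun k => ∀ i, k i ≠ 0 → i ∈ J) := by
    intro J _
    ext k
    simp only [hA, Finset.mem_piAntidiag, Finset.mem_filter]
    constructor
    · rintro ⟨hs, hsupp⟩
      refine ⟨⟨?_, fun i _ => Finset.mem_univ i⟩, hsupp⟩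
      rw [← hs]
      exact (Finset.sum_subset (subset_univ J)
        (fun i _ hi => by by_contra h; exact hi (hsupp i h))).symm
    · rintro ⟨⟨hs, _⟩, hsupp⟩
      refine ⟨?_, hsupp⟩
      rw [← hs]
      exact Finset.sum_subset (subset_univ J)
        (fun i _ hi => by by_contra h; exact hi (hsupp i h))
  -- Step B': expand the power
  have stepB : ∀ J ∈ (Finset.univ : Finset (Fin n)).powerset,
      (-1 : ℚ) ^ (n - J.card) * (∑ j ∈ J, (d j : ℚ)) ^ (n + 1)
      = ∑ k ∈ A.filter (fun k => ∀ i, k i ≠ 0 → i ∈ J), (-1 : ℚ) ^ (n - J.card) * C k := by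
    intro J hJ
    rw [Finset.sum_pow_eq_sum_piAntidiag J (fun j => (d j : ℚ)) (n + 1), Finset.mul_sum,
      hset J hJ]
    apply Finset.sum_congr rfl
    intro k hk
    rw [Finset.mem_filter] at hk
    obtain ⟨hkA, hsupp⟩ := hk
    have hout : ∀ i ∈ (Finset.univ : Finset (Fin n)), i ∉ J → k i = 0 := by
      intro i _ hiJ
      by_contra h
      exact hiJ (hsupp i h)
    have e1 : Nat.multinomial J k = Nat.multinomial Finset.univ k :=
      (my_multinomial_subset (subset_univ J) k hout).symm
    have e2 : ∏ i ∈ J, (d i : ℚ) ^ k i = ∏ i : Fin n, (d i : ℚ) ^ k i :=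
      Finset.prod_subset (subset_univ J) (fun i hi his => by rw [hout i hi his, pow_zero])
    rw [e1, e2]
  rw [Finset.sum_congr rfl stepB]
  -- Step C: swap summations
  have stepC : ∑ J ∈ (Finset.univ : Finset (Fin n)).powerset,
      ∑ k ∈ A.filter (fun k => ∀ i, k i ≠ 0 → i ∈ J), (-1 : ℚ) ^ (n - J.card) * C k
      = ∑ k ∈ A, C k *
        ∑ J ∈ (Finset.univ : Finset (Fin n)).powerset.filter
            (fun J => Finset.univ.filter (fun i => k i ≠ 0) ⊆ J),
          (-1 : ℚ) ^ (n - J.card) := by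
    simp_rw [Finset.sum_filter, Finset.mul_sum]
    rw [Finset.sum_comm]
    apply Finset.sum_congr rfl
    intro k _
    apply Finset.sum_congr rfl
    intro J _
    have hiff : (∀ i, k i ≠ 0 → i ∈ J) ↔ (Finset.univ.filter (fun i => k i ≠ 0) ⊆ J) := by
      constructor
      · intro h i hi
        rw [Finset.mem_filter] at hi
        exact h i hi.2
      · intro h i hi
        exact h (Finset.mem_filter.mpr ⟨Finset.mem_univ i, hi⟩)
    by_cases hcase : ∀ i, k i ≠ 0 → i ∈ J
    · rw [if_pos hcase, if_pos (hiff.mp hcase)]; ring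
    · rw [if_neg hcase, if_neg (fun h => hcase (hiff.mpr h))]; ring
  rw [stepC]
  -- Step D: inclusion-exclusion collapses the inner sum
  have stepD : ∀ k ∈ A, C k *
      (∑ J ∈ (Finset.univ : Finset (Fin n)).powerset.filter
          (fun J => Finset.univ.filter (fun i => k i ≠ 0) ⊆ J),
        (-1 : ℚ) ^ (n - J.card))
      = if ∀ i, k i ≠ 0 then C k else 0 := by
    intro k _
    have hmi := my_inner (Finset.univ.filter (fun i : Fin n => k i ≠ 0))
    rw [Fintype.card_fin] at hmi
    rw [hmi]
    simp only [Finset.filter_eq_self]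
    by_cases hcase : ∀ i, k i ≠ 0
    · rw [if_pos (fun i _ => hcase i), if_pos hcase, mul_one]
    · rw [if_neg (fun h => hcase (fun i => h i (Finset.mem_univ i))), if_neg hcase, mul_zero]
  rw [Finset.sum_congr rfl stepD, ← Finset.sum_filter]
  -- Step E: identify the remaining compositions
  have stepE : ∑ k ∈ A.filter (fun k => ∀ i, k i ≠ 0), C k
      = ∑ j : Fin n, C (fun i => if i = j then 2 else 1) := by
    symm
    refine Finset.sum_bij (fun j _ => fun i => if i = j then 2 else 1) ?_ ?_ ?_ ?_
    · intro j _
      rw [Finset.mem_filter]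
      constructor
      · rw [hA, Finset.mem_piAntidiag]
        refine ⟨?_, fun i _ => Finset.mem_univ i⟩
        have : ∀ i : Fin n, (if i = j then 2 else 1 : ℕ) = 1 + (if i = j then 1 else 0) := by
          intro i; split <;> rfl
        simp_rw [this]
        rw [Finset.sum_add_distrib, Finset.sum_const, Finset.sum_ite_eq' Finset.univ j
          (fun _ => 1), if_pos (Finset.mem_univ j)]
        simp [add_comm]
      · intro i
        by_cases h : i = j <;> simp [h]
    · intro j₁ _ j₂ _ h
      have h2 : (if j₁ = j₁ then 2 else 1 : ℕ) = if j₁ = j₂ then 2 else 1 := congrFun h j₁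
      rw [if_pos rfl] at h2
      by_contra hne
      rw [if_neg hne] at h2
      exact (by norm_num : (2 : ℕ) ≠ 1) h2
    · intro k hk
      rw [Finset.mem_filter, hA, Finset.mem_piAntidiag] at hk
      obtain ⟨⟨hsum, _⟩, hpos⟩ := hk
      have hsum' : ∑ i : Fin n, k i = n + 1 := hsum
      have hk1 : ∀ i, k i = (k i - 1) + 1 := by
        intro i
        have := Nat.pos_of_ne_zero (hpos i)
        omega
      have hg : ∑ i : Fin n, (k i - 1) = 1 := by
        have h1 : ∑ i : Fin n, k i = (∑ i : Fin n, (k i - 1)) + n := by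
          calc ∑ i : Fin n, k i = ∑ i : Fin n, ((k i - 1) + 1) := by
                apply Finset.sum_congr rfl; intro i _; exact hk1 i
            _ = (∑ i : Fin n, (k i - 1)) + n := by
                rw [Finset.sum_add_distrib, Finset.sum_const]; simp
        omega
      have hex : ∃ j, k j - 1 ≠ 0 := by
        by_contra h
        push_neg at h
        rw [Finset.sum_eq_zero (fun i _ => h i)] at hg
        omega
      obtain ⟨j, hj⟩ := hex
      have hjle : k j - 1 ≤ ∑ i : Fin n, (k i - 1) :=
        Finset.single_le_sum (f := fun i => k i - 1) (fun i _ => Nat.zero_le _)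
          (Finset.mem_univ j)
      have hj1 : k j - 1 = 1 := by omega
      have hrest : ∀ i, i ≠ j → k i - 1 = 0 := by
        intro i hij
        have h5 : (k j - 1) + ∑ i' ∈ Finset.univ.erase j, (k i' - 1)
            = ∑ i' : Fin n, (k i' - 1) :=
          Finset.add_sum_erase Finset.univ (fun i' => k i' - 1) (Finset.mem_univ j)
        have h6 : ∑ i' ∈ Finset.univ.erase j, (k i' - 1) = 0 := by omega
        exact Finset.sum_eq_zero_iff.mp h6 i (Finset.mem_erase.mpr ⟨hij, Finset.mem_univ i⟩)
      refine ⟨j, Finset.mem_univ j, ?_⟩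
      funext i
      have h7 := hk1 i
      by_cases hij : i = j
      · subst hij
        show (if i = i then 2 else 1) = k i
        rw [if_pos rfl]
        omega
      · show (if i = j then 2 else 1) = k i
        rw [if_neg hij]
        have := hrest i hij
        omega
    · intro j _; rfl
  rw [stepE]
  -- Step F: compute the value at each special composition
  have hsum2 : ∀ j : Fin n, ∑ i : Fin n, (if i = j then 2 else 1 : ℕ) = n + 1 := by
    intro j
    have : ∀ i : Fin n, (if i = j then 2 else 1 : ℕ) = 1 + (if i = j then 1 else 0) := by
      intro i; split <;> rfl
    simp_rw [this]
    rw [Finset.sum_add_distrib, Finset.sum_const, Finset.sum_ite_eq' Finset.univ j (fun _ => 1),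
      if_pos (Finset.mem_univ j)]
    simp [add_comm]
  have stepF : ∀ j : Fin n, C (fun i => if i = j then 2 else 1)
      = ((Nat.factorial (n + 1) : ℚ) / 2) * ((d j : ℚ) * ∏ i : Fin n, (d i : ℚ)) := by
    intro j
    have hmult : (Nat.multinomial Finset.univ (fun i : Fin n => if i = j then 2 else 1) : ℚ)
        = (Nat.factorial (n + 1) : ℚ) / 2 := by
      have hspec := Nat.multinomial_spec Finset.univ (fun i : Fin n => if i = j then 2 else 1)
      have hprod : ∏ i : Fin n, Nat.factorial (if i = j then 2 else 1) = 2 := by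
        have : ∀ i : Fin n, Nat.factorial (if i = j then 2 else 1)
            = (if i = j then 2 else 1 : ℕ) := by
          intro i; split <;> rfl
        simp_rw [this]
        rw [Finset.prod_ite_eq' Finset.univ j (fun _ => 2), if_pos (Finset.mem_univ j)]
      rw [hprod, hsum2 j] at hspec
      have := congrArg (fun z : ℕ => (z : ℚ)) hspec
      push_cast at this
      linarith
    simp only [hC]
    rw [hmult]
    have hprodd : ∏ i : Fin n, (d i : ℚ) ^ (if i = j then 2 else 1)
        = (d j : ℚ) * ∏ i : Fin n, (d i : ℚ) := by
      rw [← Finset.mul_prod_erase Finset.univ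
        (fun i => (d i : ℚ) ^ (if i = j then 2 else 1)) (Finset.mem_univ j),
        ← Finset.mul_prod_erase Finset.univ (fun i => (d i : ℚ)) (Finset.mem_univ j)]
      rw [if_pos rfl]
      have : ∏ i ∈ Finset.univ.erase j, (d i : ℚ) ^ (if i = j then 2 else 1)
          = ∏ i ∈ Finset.univ.erase j, (d i : ℚ) := by
        apply Finset.prod_congr rfl
        intro i hi
        rw [if_neg (Finset.mem_erase.mp hi).1, pow_one]
      rw [this]
      ring
    rw [hprodd]
  rw [Finset.sum_congr rfl (fun j _ => stepF j)]
  rw [← Finset.mul_sum, ← Finset.sum_mul]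
  ring
end

section
/- Let f, g : ℝ^m → ℝ be convex functions that are each piecewise linear (finite maxima of affine functions). Then the set of points where f + g fails to be locally affine equals the union of the set where f fails to be locally affine and the set where g fails to be locally affine. -/
/-- `h` is locally affine at `p` if it agrees with an affine function near `p`. -/
def LocallyAffineAt (m : ℕ) (h : (Fin m → ℝ) → ℝ) (p : Fin m → ℝ) : Prop :=
  ∃ (l : (Fin m → ℝ) →ₗ[ℝ] ℝ) (c : ℝ), ∀ᶠ y in nhds p, h y = l y + c

/-- `h` is a (pointwise) maximum of finitely many affine functions. -/
def IsFiniteMaxOfAffine (m : ℕ) (h : (Fin m → ℝ) → ℝ) : Prop :=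
  ∃ (A : Finset (Fin m → ℝ)) (hA : A.Nonempty) (lam : (Fin m → ℝ) → ℝ),
    ∀ x, h x = A.sup' hA (fun a => lam a + ∑ i, a i * x i)

/-- linear map given by a coefficient vector -/
noncomputable def lmapAux (m : ℕ) (a : Fin m → ℝ) : (Fin m → ℝ) →ₗ[ℝ] ℝ :=
  ∑ i, a i • LinearMap.proj i

lemma lmapAux_apply (m : ℕ) (a x : Fin m → ℝ) : lmapAux m a x = ∑ i, a i * x i := by
  simp [lmapAux]

lemma affine_nonneg_zero {m : ℕ} (L : (Fin m → ℝ) →ₗ[ℝ] ℝ) (c : ℝ) (p : Fin m → ℝ)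
    (h : ∀ᶠ y in nhds p, 0 ≤ L y + c) (h0 : L p + c = 0) : ∀ x, L x + c = 0 := by
  have hv : ∀ v, L v = 0 := by
    intro v
    have cont : Filter.Tendsto (fun t : ℝ => p + t • v) (nhds 0) (nhds p) := by
      have hc : Continuous fun t : ℝ => p + t • v := by continuity
      have := hc.tendsto 0
      simpa using this
    have ht : ∀ᶠ t in nhds (0:ℝ), 0 ≤ t * L v := by
      filter_upwards [cont.eventually h] with t ht
      have heq : L (p + t • v) + c = t * L v := by
        rw [map_add, map_smul, smul_eq_mul]; linarith
      linarith
    have h1 : 0 ≤ L v := by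
      obtain ⟨t, h1, h2⟩ := ((ht.filter_mono (nhdsWithin_le_nhds (s := Set.Ioi (0:ℝ)))).and
        eventually_mem_nhdsWithin).exists
      have hp : (0:ℝ) < t := h2
      nlinarith
    have h2 : L v ≤ 0 := by
      obtain ⟨t, h1, h2⟩ := ((ht.filter_mono (nhdsWithin_le_nhds (s := Set.Iio (0:ℝ)))).and
        eventually_mem_nhdsWithin).exists
      have hn : t < 0 := h2
      nlinarith
    linarith
  intro x
  have hx := hv x; have hp := hv p; linarith

theorem stmt_19 (m : ℕ) (f g : (Fin m → ℝ) → ℝ)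
    (hfc : ConvexOn ℝ Set.univ f) (hgc : ConvexOn ℝ Set.univ g)
    (hf : IsFiniteMaxOfAffine m f) (hg : IsFiniteMaxOfAffine m g) :
    {p | ¬ LocallyAffineAt m (f + g) p}
      = {p | ¬ LocallyAffineAt m f p} ∪ {p | ¬ LocallyAffineAt m g p} := by
  obtain ⟨A, hA, lam, hfA⟩ := hf
  obtain ⟨B, hB, mu, hgB⟩ := hg
  ext p
  simp only [Set.mem_union, Set.mem_setOf_eq]
  have key : LocallyAffineAt m (f + g) p ↔
      LocallyAffineAt m f p ∧ LocallyAffineAt m g p := by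
    constructor
    · rintro ⟨l, c, hev⟩
      obtain ⟨a₀, ha₀, hfa₀⟩ := Finset.exists_mem_eq_sup' hA (fun a => lam a + ∑ i, a i * p i)
      obtain ⟨b₀, hb₀, hgb₀⟩ := Finset.exists_mem_eq_sup' hB (fun b => mu b + ∑ i, b i * p i)
      have hfp : f p = lam a₀ + ∑ i, a₀ i * p i := by rw [hfA]; exact hfa₀
      have hgp : g p = mu b₀ + ∑ i, b₀ i * p i := by rw [hgB]; exact hgb₀
      have hle_f : ∀ x, lam a₀ + ∑ i, a₀ i * x i ≤ f x := fun x => by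
        rw [hfA]; exact Finset.le_sup' (fun a => lam a + ∑ i, a i * x i) ha₀
      have hle_g : ∀ x, mu b₀ + ∑ i, b₀ i * x i ≤ g x := fun x => by
        rw [hgB]; exact Finset.le_sup' (fun b => mu b + ∑ i, b i * x i) hb₀
      have hevp : f p + g p = l p + c := hev.self_of_nhds
      have hz := affine_nonneg_zero (l - lmapAux m a₀ - lmapAux m b₀)
        (c - lam a₀ - mu b₀) p ?_ ?_
      · refine ⟨⟨lmapAux m a₀, lam a₀, ?_⟩, ⟨lmapAux m b₀, mu b₀, ?_⟩⟩
        · filter_upwards [hev] with y hy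
          have hzy := hz y
          simp only [LinearMap.sub_apply, lmapAux_apply] at hzy
          have h1 := hle_f y; have h2 := hle_g y
          have hy' : f y + g y = l y + c := hy
          rw [lmapAux_apply]; linarith
        · filter_upwards [hev] with y hy
          have hzy := hz y
          simp only [LinearMap.sub_apply, lmapAux_apply] at hzy
          have h1 := hle_f y; have h2 := hle_g y
          have hy' : f y + g y = l y + c := hy
          rw [lmapAux_apply]; linarith
      · filter_upwards [hev] with y hy
        have h1 := hle_f y; have h2 := hle_g y
        have hy' : f y + g y = l y + c := hy
        simp only [LinearMap.sub_apply, lmapAux_apply]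
        linarith
      · simp only [LinearMap.sub_apply, lmapAux_apply]
        linarith
    · rintro ⟨⟨lf, cf, hf'⟩, ⟨lg, cg, hg'⟩⟩
      refine ⟨lf + lg, cf + cg, ?_⟩
      filter_upwards [hf', hg'] with y h1 h2
      simp only [Pi.add_apply, LinearMap.add_apply, h1, h2]
      ring
  tauto
end
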